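/- arXiv:2305.01646 — 2 statements merged into one kernel-verified Lean document; each statement's English description precedes it below -/
import Mathlib

section
/- The hypersurface {f = 1} is of contact type: for every p with f(p) = 1 and every nonzero v ∈ ℝ⁴ satisfying α_p(v) = 0 and (fderiv ℝ f p)(v) = 0, there exists u ∈ ℝ⁴ with α_p(u) = 0 and (fderiv ℝ f p)(u) = 0 such that ω(v, u) ≠ 0. In other words, ω = dα restricts to a nondegenerate form on the contact hyperplane ξ_p = ker α_p ∩ ker (df)_p at every point of {f = 1}. -/
noncomputable section

/-- The standard symplectic bilinear form `ω(u,v) = u₁v₂ - u₂v₁ + u₃v₄ - u₄v₃` on ℝ⁴. -/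
def ωW (u v : Fin 4 → ℝ) : ℝ :=
  u 0 * v 1 - u 1 * v 0 + u 2 * v 3 - u 3 * v 2

/-- The function `f(x,y,z,w) = x²/4 + y²/4 + z² - w²/2` from the Weinstein one-handle model. -/
def fW (p : Fin 4 → ℝ) : ℝ :=
  (1 / 4) * p 0 ^ 2 + (1 / 4) * p 1 ^ 2 + p 2 ^ 2 - (1 / 2) * p 3 ^ 2

/-- The 1-form `α = (1/2)x dy - (1/2)y dx + 2z dw + w dz`. -/
def αW (p v : Fin 4 → ℝ) : ℝ :=
  (1 / 2) * p 0 * v 1 - (1 / 2) * p 1 * v 0 + 2 * p 2 * v 3 + p 3 * v 2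

/-!
The Liouville field `X` is the Euclidean gradient of `f`, so `α_p = ω(X_p, ·)` and
`(df)_p = ⟨X_p, ·⟩`. The standard complex structure `J` satisfies `ω(a, J b) = ⟨a, b⟩` and
`J² = -1`, hence `α_p(J v) = (df)_p(v)` and `(df)_p(J v) = -α_p(v)`: `J` preserves `ξ_p`, and
`u = J v` works because `ω(v, J v) = |v|² > 0`.
-/

open Matrix

def stdJ (v : Fin 4 → ℝ) : Fin 4 → ℝ := ![-v 1, v 0, -v 3, v 2]

def liouvilleW (p : Fin 4 → ℝ) : Fin 4 → ℝ := ![p 0 / 2, p 1 / 2, 2 * p 2, -p 3]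

section

variable (p a b v : Fin 4 → ℝ)

lemma ωW_stdJ_right : ωW a (stdJ b) = a ⬝ᵥ b := by
  simp [ωW, stdJ, dotProduct, Fin.sum_univ_four]

lemma ωW_neg_right : ωW a (-b) = -ωW a b := by
  simp only [ωW, Pi.neg_apply]
  ring

lemma stdJ_stdJ : stdJ (stdJ v) = -v := by
  ext i
  fin_cases i <;> simp [stdJ]

lemma αW_eq_ωW_liouvilleW : αW p v = ωW (liouvilleW p) v := by
  simp only [αW, ωW, liouvilleW, cons_val_zero, cons_val_one, cons_val_two, cons_val_three,
    head_cons, tail_cons]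
  ring

lemma fderiv_fW_apply : fderiv ℝ fW p v = liouvilleW p ⬝ᵥ v := by
  have hsq (i : Fin 4) := (hasFDerivAt_apply (𝕜 := ℝ) i p).pow 2
  have h : HasFDerivAt fW _ p := ((((hsq 0).const_mul (1 / 4)).add
    ((hsq 1).const_mul (1 / 4))).add (hsq 2)).sub ((hsq 3).const_mul (1 / 2))
  rw [h.fderiv]
  simp only [_root_.sub_apply, _root_.add_apply, _root_.smul_apply, ContinuousLinearMap.proj_apply,
    smul_eq_mul, nsmul_eq_mul, dotProduct, liouvilleW, Fin.sum_univ_four, cons_val_zero,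
    cons_val_one, cons_val, Nat.cast_ofNat]
  ring

lemma αW_stdJ : αW p (stdJ v) = fderiv ℝ fW p v := by
  rw [αW_eq_ωW_liouvilleW, ωW_stdJ_right, fderiv_fW_apply]

lemma fderiv_fW_stdJ : fderiv ℝ fW p (stdJ v) = -αW p v := by
  rw [fderiv_fW_apply, ← ωW_stdJ_right, stdJ_stdJ, ωW_neg_right, αW_eq_ωW_liouvilleW]

variable {v} in
lemma ωW_stdJ_self_ne_zero (hv : v ≠ 0) : ωW v (stdJ v) ≠ 0 := by
  rw [ωW_stdJ_right]
  exact mt dotProduct_self_eq_zero.mp hv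

end

theorem level_set_contact_type_general (p : Fin 4 → ℝ)
    (v : Fin 4 → ℝ) (hv : v ≠ 0) (hαv : αW p v = 0) (hfv : fderiv ℝ fW p v = 0) :
    ∃ u : Fin 4 → ℝ, αW p u = 0 ∧ fderiv ℝ fW p u = 0 ∧ ωW v u ≠ 0 :=
  ⟨stdJ v, by rw [αW_stdJ, hfv], by rw [fderiv_fW_stdJ, hαv, neg_zero], ωW_stdJ_self_ne_zero hv⟩

/-- The hypersurface `{f = 1}` is of contact type: `ω = dα` restricts to a nondegenerate form
on the contact hyperplane `ξ_p = ker α_p ∩ ker (df)_p` at every point of `{f = 1}`. -/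
theorem level_set_contact_type (p : Fin 4 → ℝ) (hp : fW p = 1)
    (v : Fin 4 → ℝ) (hv : v ≠ 0) (hαv : αW p v = 0) (hfv : fderiv ℝ fW p v = 0) :
    ∃ u : Fin 4 → ℝ, αW p u = 0 ∧ fderiv ℝ fW p u = 0 ∧ ωW v u ≠ 0 :=
  level_set_contact_type_general p v hv hαv hfv
end
end

section
/- The vector field R is the Reeb vector field of α on the hypersurface {f = 1}: for every p ∈ ℝ⁴ one has (fderiv ℝ f p)(R(p)) = 0 (so R is tangent to every level set of f) and ω(R(p), v) = −κ(p)·(fderiv ℝ f p)(v) for all v ∈ ℝ⁴ (so dα(R(p), v) = 0 whenever v is tangent to {f = 1}); moreover, if f(p) = 1 then α_p(R(p)) = 1, using the identity (1/4)x² + (1/4)y² + 4z² + w² = 1 + 3z² + (3/2)w² valid on {f = 1}. -/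
noncomputable section

/-- The function `κ(p) = 1/(1 + 3z² + (3/2)w²)`. -/
def κW (p : Fin 4 → ℝ) : ℝ :=
  1 / (1 + 3 * p 2 ^ 2 + (3 / 2) * p 3 ^ 2)

/-- The Reeb vector field `R(p) = κ(p)·(-(1/2)y, (1/2)x, w, 2z)`. -/
def RW (p : Fin 4 → ℝ) : Fin 4 → ℝ :=
  κW p • ![-(1 / 2) * p 1, (1 / 2) * p 0, p 3, 2 * p 2]

lemma fderiv_fW (p v : Fin 4 → ℝ) :
    fderiv ℝ fW p v = (1/2) * p 0 * v 0 + (1/2) * p 1 * v 1 + 2 * p 2 * v 2 - p 3 * v 3 := by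
  have h : ∀ i : Fin 4, HasFDerivAt (fun q : Fin 4 → ℝ => q i)
      (ContinuousLinearMap.proj (R := ℝ) (φ := fun _ : Fin 4 => ℝ) i) p :=
    fun i => hasFDerivAt_apply (𝕜 := ℝ) i p
  have hf : fW = fun q : Fin 4 → ℝ =>
      (1/4)*(q 0 * q 0) + (1/4)*(q 1 * q 1) + q 2 * q 2 - (1/2)*(q 3 * q 3) := by
    funext q; simp [fW]; ring
  have H := ((((h 0).mul (h 0)).const_mul (1/4:ℝ)).add
      (((h 1).mul (h 1)).const_mul (1/4:ℝ)) |>.add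
      ((h 2).mul (h 2))).sub (((h 3).mul (h 3)).const_mul (1/2:ℝ))
  rw [hf, (show HasFDerivAt (fun q : Fin 4 → ℝ =>
      (1/4)*(q 0 * q 0) + (1/4)*(q 1 * q 1) + q 2 * q 2 - (1/2)*(q 3 * q 3)) _ p from H).fderiv]
  simp [ContinuousLinearMap.proj]
  ring

lemma RW_apply (p : Fin 4 → ℝ) :
    RW p 0 = κW p * (-(1 / 2) * p 1) ∧ RW p 1 = κW p * ((1 / 2) * p 0) ∧
    RW p 2 = κW p * p 3 ∧ RW p 3 = κW p * (2 * p 2) := by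
  refine ⟨?_, ?_, ?_, ?_⟩ <;> simp [RW]

/-- `R` is the Reeb vector field of `α` on `{f = 1}`: `R` is tangent to every level set of `f`,
`ω(R(p), ·) = -κ(p)·df_p`, the identity `x²/4 + y²/4 + 4z² + w² = 1 + 3z² + (3/2)w²` holds on
`{f = 1}`, and `α_p(R(p)) = 1` there. -/
theorem reeb_vector_field (p : Fin 4 → ℝ) :
    fderiv ℝ fW p (RW p) = 0 ∧
    (∀ v : Fin 4 → ℝ, ωW (RW p) v = -κW p * fderiv ℝ fW p v) ∧
    (fW p = 1 →
      (1 / 4) * p 0 ^ 2 + (1 / 4) * p 1 ^ 2 + 4 * p 2 ^ 2 + p 3 ^ 2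
        = 1 + 3 * p 2 ^ 2 + (3 / 2) * p 3 ^ 2 ∧
      αW p (RW p) = 1) := by
  obtain ⟨h0, h1, h2, h3⟩ := RW_apply p
  refine ⟨?_, ?_, ?_⟩
  · rw [fderiv_fW, h0, h1, h2, h3]; ring
  · intro v
    rw [fderiv_fW]
    simp only [ωW, h0, h1, h2, h3]
    ring
  · intro hfp
    have hd : (0:ℝ) < 1 + 3 * p 2 ^ 2 + (3 / 2) * p 3 ^ 2 := by positivity
    have hid : (1 / 4) * p 0 ^ 2 + (1 / 4) * p 1 ^ 2 + 4 * p 2 ^ 2 + p 3 ^ 2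
        = 1 + 3 * p 2 ^ 2 + (3 / 2) * p 3 ^ 2 := by
      have := hfp; unfold fW at this; nlinarith [this]
    refine ⟨hid, ?_⟩
    have hα : αW p (RW p) = κW p *
        ((1 / 4) * p 0 ^ 2 + (1 / 4) * p 1 ^ 2 + 4 * p 2 ^ 2 + p 3 ^ 2) := by
      simp only [αW, h0, h1, h2, h3]; ring
    rw [hα, hid, κW, one_div, inv_mul_cancel₀ hd.ne']
end
end
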